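/- arXiv:1603.01230 — 2 statements merged into one kernel-verified Lean document; each statement's English description precedes it below -/
import Mathlib

section
/- For the retraction maps one has the pointwise bounds: (⨍_{B(x,t)} |π_t(G)(y)|^r dy)^{1/r} ≤ C·A_r(G)(x) for all G on ℝ^{n+1}_+, and A_r(i_t(f))(x) ≤ C·(⨍_{B(x,et)} |f(y)|^r dy)^{1/r} for all locally r-integrable f on ℝⁿ, with constants C depending only on n and r (not on t). -/
/-!
The measure `ds/s` on `(t, e t]` has total mass `log e = 1`, so `π_t G (y)` is an average of
`G(y, ·)` against a probability measure and Jensen bounds `|π_t G (y)|^r` by the `ds/s`-average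
of `|G(y, s)|^r`. Integrating over `y ∈ B(x, t) ⊆ B(x, s)` and using `s⁻¹ ≤ (e t)^n s^(-n-1)`
for `s ≤ e t` gives `A_r(G)(x)^r` up to the factor `(e t)^n = e^n |B(x, t)| / |B(0, 1)|`.
Conversely `i_t f` lives on `t ≤ s ≤ e t`, where `B(x, s) ⊆ B(x, e t)` and
`s^(-n-1) ≤ s⁻¹ t^(-n)`, so the same mass computation gives
`A_r(i_t f)(x)^r ≤ t^(-n) ∫_{B(x, e t)} |f|^r`.
-/

open MeasureTheory Metric Set ENNReal
open scoped NNReal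

noncomputable section

abbrev Rn (n : ℕ) := EuclideanSpace ℝ (Fin n)

variable {n : ℕ}

/-- `L^r` average of an `ℝ≥0∞`-valued function over a ball. -/
def ballAvg (r : ℝ) (g : Rn n → ℝ≥0∞) (x : Rn n) (t : ℝ) : ℝ≥0∞ :=
  ((volume (ball x t))⁻¹ * ∫⁻ y in ball x t, (g y) ^ r) ^ (1 / r)

/-- Centered Hardy–Littlewood maximal operator. -/
def maximal (f : Rn n → ℝ) (x : Rn n) : ℝ≥0∞ :=
  ⨆ (τ : ℝ) (_ : 0 < τ), (volume (ball x τ))⁻¹ * ∫⁻ y in ball x τ, (‖f y‖₊ : ℝ≥0∞)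

/-- Uncentered Hardy–Littlewood maximal operator of an `ℝ≥0∞`-valued function. -/
def umaximal (g : Rn n → ℝ≥0∞) (x : Rn n) : ℝ≥0∞ :=
  ⨆ (z : Rn n) (τ : ℝ) (_ : 0 < τ) (_ : x ∈ ball z τ),
    (volume (ball z τ))⁻¹ * ∫⁻ y in ball z τ, g y

/-- Conical square functional `A_r` (with the `dy dt / t^{n+1}` measure). -/
def conical (r : ℝ) (G : Rn n → ℝ → ℝ≥0∞) (x : Rn n) : ℝ≥0∞ :=
  (∫⁻ t in Ioi (0 : ℝ),
      (∫⁻ y in ball x t, (G y t) ^ r) * ENNReal.ofReal (t ^ (-(n : ℝ) - 1))) ^ (1 / r)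

/-- Tent space quasinorm `‖G‖_{T^q_r} = ‖A_r G‖_{L^q}`. -/
def tentNorm (q r : ℝ) (G : Rn n → ℝ → ℝ≥0∞) : ℝ≥0∞ :=
  (∫⁻ x, (conical r G x) ^ q) ^ (1 / q)

def enn (F : Rn n → ℝ → ℝ) : Rn n → ℝ → ℝ≥0∞ := fun y t => (‖F y t‖₊ : ℝ≥0∞)

/-- Vertical square functional `V_r`. -/
def vertical (r : ℝ) (G : Rn n → ℝ → ℝ≥0∞) (x : Rn n) : ℝ≥0∞ :=
  (∫⁻ t in Ioi (0 : ℝ), (G x t) ^ r * ENNReal.ofReal t⁻¹) ^ (1 / r)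

/-- Tent over the ball `B(x₀,ρ)`: points `(x,t)` with `t ≤ dist(x, ℝⁿ ∖ B)`. -/
def tent (x₀ : Rn n) (ρ : ℝ) : Set (Rn n × ℝ) :=
  {p | 0 < p.2 ∧ p.2 ≤ infDist p.1 (ball x₀ ρ)ᶜ}

/-- `∬_S |M(x,t)|^r dx dt/t`. -/
def tentInt (r : ℝ) (M : Rn n → ℝ → ℝ) (S : Set (Rn n × ℝ)) : ℝ≥0∞ :=
  ∫⁻ t in Ioi (0 : ℝ),
    (∫⁻ y, S.indicator (fun p => (‖M p.1 p.2‖₊ : ℝ≥0∞) ^ r) (y, t)) * ENNReal.ofReal t⁻¹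

/-- Maximal truncated singular integral `T_*`. -/
def tstar (K : Rn n → Rn n → ℝ) (f : Rn n → ℝ) (x : Rn n) : ℝ≥0∞ :=
  ⨆ (ε : ℝ) (_ : 0 < ε), (‖∫ y in {y | ε < dist x y}, K x y * f y‖₊ : ℝ≥0∞)

def rieszGamma (n : ℕ) (α : ℝ) : ℝ :=
  Real.pi ^ ((n : ℝ) / 2) * 2 ^ α * Real.Gamma (α / 2) / Real.Gamma (((n : ℝ) - α) / 2)

/-- Riesz potential of an `ℝ≥0∞`-valued function. -/
def rieszPot (α : ℝ) (g : Rn n → ℝ≥0∞) (x : Rn n) : ℝ≥0∞ :=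
  (ENNReal.ofReal (rieszGamma n α))⁻¹ * ∫⁻ z, g z * ENNReal.ofReal (dist x z ^ (α - n))

/-- Fractional maximal function `M_α f(x) = sup_τ |B(x,τ)|^{α/n} ⨍_{B(x,τ)} |f|`. -/
def fracMax (α : ℝ) (f : Rn n → ℝ) (x : Rn n) : ℝ≥0∞ :=
  ⨆ (τ : ℝ) (_ : 0 < τ),
    (volume (ball x τ)) ^ (α / n) *
      ((volume (ball x τ))⁻¹ * ∫⁻ y in ball x τ, (‖f y‖₊ : ℝ≥0∞))

/-- `T^q_r` atom. -/
def IsTentAtom (q r : ℝ) (A : Rn n → ℝ → ℝ) : Prop :=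
  ∃ (x₀ : Rn n) (ρ : ℝ), 0 < ρ ∧ (∀ y t, A y t ≠ 0 → (y, t) ∈ tent x₀ ρ) ∧
    (tentInt r A Set.univ) ^ (1 / r) ≤ (volume (ball x₀ ρ)) ^ (1 / r - 1 / q)

/-- `𝔗^q_r` atom: a `T^q_r` atom with vanishing mean in `x` for a.e. `t > 0`. -/
def IsFrakAtom (q r : ℝ) (A : Rn n → ℝ → ℝ) : Prop :=
  IsTentAtom q r A ∧ ∀ᵐ t ∂(volume.restrict (Ioi (0 : ℝ))), (∫ x, A x t) = 0

/-- `𝔗^q_r` quasinorm via atomic decompositions into `𝔗^q_r` atoms. -/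
def frakNorm (q r : ℝ) (F : Rn n → ℝ → ℝ) : ℝ≥0∞ :=
  ⨅ (d : {p : (ℕ → ℝ) × (ℕ → Rn n → ℝ → ℝ) //
      (∀ i, IsFrakAtom q r (p.2 i)) ∧ ∀ y t, F y t = ∑' i, p.1 i * p.2 i y t}),
    ENNReal.ofReal ((∑' i, |d.1.1 i| ^ q) ^ (1 / q))

/-- Slice-space quasinorm `‖f‖_{(E^p_r)_t}`. -/
def sliceNorm (p r t : ℝ) (f : Rn n → ℝ) : ℝ≥0∞ :=
  (∫⁻ x, ((volume (ball x t))⁻¹ * ∫⁻ y in ball x t, (‖f y‖₊ : ℝ≥0∞) ^ r) ^ (p / r)) ^ (1 / p)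

def iMap (t : ℝ) (f : Rn n → ℝ) : Rn n → ℝ → ℝ :=
  fun x s => if s ∈ Icc t (Real.exp 1 * t) then f x else 0

def piMap (t : ℝ) (G : Rn n → ℝ → ℝ) : Rn n → ℝ :=
  fun x => ∫ s in Ioc t (Real.exp 1 * t), G x s / s

theorem rpow_lintegral_le_lintegral_rpow {α : Type*}
    [MeasurableSpace α] {μ : Measure α} [IsProbabilityMeasure μ] {r : ℝ} (hr : 1 ≤ r)
    {f : α → ℝ≥0∞} (hf : AEMeasurable f μ) :
    (∫⁻ a, f a ∂μ) ^ r ≤ ∫⁻ a, f a ^ r ∂μ := by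
  have hr0 : 0 < r := zero_lt_one.trans_le hr
  have h := eLpNorm_le_eLpNorm_of_exponent_le (ENNReal.one_le_ofReal.mpr hr)
    hf.aestronglyMeasurable
  rw [eLpNorm_one_eq_lintegral_enorm, eLpNorm_eq_lintegral_rpow_enorm_toReal
    (by positivity) ofReal_ne_top, ENNReal.toReal_ofReal hr0.le] at h
  simp only [enorm_eq_self] at h
  calc (∫⁻ a, f a ∂μ) ^ r ≤ ((∫⁻ a, f a ^ r ∂μ) ^ (1 / r)) ^ r := by gcongr
    _ = ∫⁻ a, f a ^ r ∂μ := by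
      rw [← ENNReal.rpow_mul, one_div_mul_cancel hr0.ne', ENNReal.rpow_one]

theorem rpow_lintegral_mul_le_lintegral_mul_rpow {α : Type*}
    [MeasurableSpace α] {μ : Measure α} {r : ℝ} (hr : 1 ≤ r)
    {f w : α → ℝ≥0∞} (hf : AEMeasurable f μ) (hw : AEMeasurable w μ) (hw1 : ∫⁻ a, w a ∂μ = 1) :
    (∫⁻ a, w a * f a ∂μ) ^ r ≤ ∫⁻ a, w a * f a ^ r ∂μ := by
  have : IsProbabilityMeasure (μ.withDensity w) :=
    ⟨by rwa [withDensity_apply _ .univ, Measure.restrict_univ]⟩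
  have hfw : AEMeasurable f (μ.withDensity w) := hf.mono' (withDensity_absolutelyContinuous μ w)
  simpa only [lintegral_withDensity_eq_lintegral_mul₀ hw hf,
    lintegral_withDensity_eq_lintegral_mul₀ hw (hf.pow_const r), Pi.mul_apply] using
    rpow_lintegral_le_lintegral_rpow hr hfw

theorem lintegral_inv_Ioc_exp_one_mul {t : ℝ} (ht : 0 < t) :
    ∫⁻ s in Ioc t (Real.exp 1 * t), ENNReal.ofReal s⁻¹ = 1 := by
  have hle : t ≤ Real.exp 1 * t := le_mul_of_one_le_left ht.le (Real.one_le_exp zero_le_one)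
  have hint : IntegrableOn (fun s : ℝ => s⁻¹) (Ioc t (Real.exp 1 * t)) :=
    (intervalIntegral.intervalIntegrable_inv
      (fun s hs => (ht.trans_le (uIcc_of_le hle ▸ hs).1).ne') continuousOn_id).1
  rw [← ofReal_integral_eq_lintegral_ofReal hint, ← intervalIntegral.integral_of_le hle,
    integral_inv_of_pos ht (by positivity), mul_div_cancel_right₀ _ ht.ne', Real.log_exp,
    ENNReal.ofReal_one]
  exact (ae_restrict_mem measurableSet_Ioc).mono fun s hs => inv_nonneg.2 (ht.trans hs.1).le

theorem volume_ball_eq_ofReal_pow_mul (x : Rn n) {ρ : ℝ} (hρ : 0 < ρ) :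
    volume (ball x ρ) = ENNReal.ofReal (ρ ^ n) * volume (ball (0 : Rn n) 1) := by
  simpa only [finrank_euclideanSpace_fin] using Measure.addHaar_ball_of_pos volume x hρ

theorem inv_volume_ball (x : Rn n) {ρ : ℝ} (hρ : 0 < ρ) :
    (volume (ball x ρ))⁻¹ = (ENNReal.ofReal (ρ ^ n))⁻¹ * (volume (ball (0 : Rn n) 1))⁻¹ :=
  (volume_ball_eq_ofReal_pow_mul x hρ).symm ▸ ENNReal.mul_inv (.inr (measure_ball_lt_top.ne))
    (.inl ofReal_ne_top)

theorem ofReal_rpow_neg_natCast_sub_one {s : ℝ} (hs : 0 < s) :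
    ENNReal.ofReal (s ^ (-(n : ℝ) - 1)) = ENNReal.ofReal s⁻¹ * (ENNReal.ofReal (s ^ n))⁻¹ := by
  rw [← ENNReal.ofReal_inv_of_pos (by positivity), ← ENNReal.ofReal_mul (by positivity),
    ← Real.rpow_natCast, ← Real.rpow_neg_one, ← Real.rpow_neg hs.le, ← Real.rpow_add hs]
  ring_nf

theorem enorm_piMap_le {t : ℝ} (ht : 0 < t) (G : Rn n → ℝ → ℝ) (y : Rn n) :
    (‖piMap t G y‖₊ : ℝ≥0∞) ≤
      ∫⁻ s in Ioc t (Real.exp 1 * t), ENNReal.ofReal s⁻¹ * ‖G y s‖ₑ := by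
  refine (enorm_integral_le_lintegral_enorm _).trans (setLIntegral_mono' measurableSet_Ioc
    fun s hs => ?_)
  rw [div_eq_mul_inv, enorm_mul, Real.enorm_eq_ofReal (inv_nonneg.2 (ht.trans hs.1).le), mul_comm]

theorem enorm_piMap_rpow_le {r : ℝ} (hr : 1 ≤ r) {t : ℝ} (ht : 0 < t) {G : Rn n → ℝ → ℝ}
    (hG : Measurable (Function.uncurry G)) (y : Rn n) :
    (‖piMap t G y‖₊ : ℝ≥0∞) ^ r ≤
      ∫⁻ s in Ioc t (Real.exp 1 * t), ENNReal.ofReal s⁻¹ * ‖G y s‖ₑ ^ r :=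
  (ENNReal.rpow_le_rpow (enorm_piMap_le ht G y) (zero_le_one.trans hr)).trans <|
    rpow_lintegral_mul_le_lintegral_mul_rpow hr
      (hG.comp measurable_prodMk_left).enorm.aemeasurable
      measurable_inv.ennreal_ofReal.aemeasurable (lintegral_inv_Ioc_exp_one_mul ht)

theorem conical_rpow {r : ℝ} (hr : 0 < r) (G : Rn n → ℝ → ℝ≥0∞) (x : Rn n) :
    conical r G x ^ r = ∫⁻ s in Ioi (0 : ℝ),
      (∫⁻ y in ball x s, G y s ^ r) * ENNReal.ofReal (s ^ (-(n : ℝ) - 1)) := by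
  rw [conical, ← ENNReal.rpow_mul, one_div_mul_cancel hr.ne', ENNReal.rpow_one]

theorem lintegral_ball_piMap_rpow_le {r : ℝ} (hr : 1 ≤ r) {t : ℝ} (ht : 0 < t)
    {G : Rn n → ℝ → ℝ} (hG : Measurable (Function.uncurry G)) (x : Rn n) :
    ∫⁻ y in ball x t, (‖piMap t G y‖₊ : ℝ≥0∞) ^ r ≤
      ENNReal.ofReal ((Real.exp 1 * t) ^ n) * conical r (enn G) x ^ r := by
  set ρ := Real.exp 1 * t
  have hslice : ∀ s ∈ Ioc t ρ, ENNReal.ofReal s⁻¹ * ∫⁻ y in ball x t, ‖G y s‖ₑ ^ r ≤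
      ENNReal.ofReal (ρ ^ n) *
        ((∫⁻ y in ball x s, ‖G y s‖ₑ ^ r) * ENNReal.ofReal (s ^ (-(n : ℝ) - 1))) := by
    intro s hs
    have hs0 : 0 < s := ht.trans hs.1
    have hpow : 1 ≤ ENNReal.ofReal (ρ ^ n) * (ENNReal.ofReal (s ^ n))⁻¹ := by
      rw [← div_eq_mul_inv, ENNReal.le_div_iff_mul_le (.inl (by positivity)) (.inl ofReal_ne_top),
        one_mul]
      exact ENNReal.ofReal_le_ofReal (by gcongr; exact hs.2)
    calc ENNReal.ofReal s⁻¹ * ∫⁻ y in ball x t, ‖G y s‖ₑ ^ r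
        ≤ ENNReal.ofReal s⁻¹ * (∫⁻ y in ball x s, ‖G y s‖ₑ ^ r) * 1 := by
          rw [mul_one]; gcongr; exact hs.1.le
      _ ≤ ENNReal.ofReal s⁻¹ * (∫⁻ y in ball x s, ‖G y s‖ₑ ^ r) *
            (ENNReal.ofReal (ρ ^ n) * (ENNReal.ofReal (s ^ n))⁻¹) := by gcongr
      _ = _ := by rw [ofReal_rpow_neg_natCast_sub_one hs0]; ring
  calc ∫⁻ y in ball x t, (‖piMap t G y‖₊ : ℝ≥0∞) ^ r
      ≤ ∫⁻ y in ball x t, ∫⁻ s in Ioc t ρ, ENNReal.ofReal s⁻¹ * ‖G y s‖ₑ ^ r :=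
        lintegral_mono fun y => enorm_piMap_rpow_le hr ht hG y
    _ = ∫⁻ s in Ioc t ρ, ∫⁻ y in ball x t, ENNReal.ofReal s⁻¹ * ‖G y s‖ₑ ^ r :=
        lintegral_lintegral_swap (by fun_prop)
    _ = ∫⁻ s in Ioc t ρ, ENNReal.ofReal s⁻¹ * ∫⁻ y in ball x t, ‖G y s‖ₑ ^ r := by
        simp_rw [lintegral_const_mul' _ _ ofReal_ne_top]
    _ ≤ ∫⁻ s in Ioi 0, ENNReal.ofReal (ρ ^ n) *
          ((∫⁻ y in ball x s, ‖G y s‖ₑ ^ r) * ENNReal.ofReal (s ^ (-(n : ℝ) - 1))) :=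
        (setLIntegral_mono' measurableSet_Ioc hslice).trans
          (lintegral_mono_set fun s hs => ht.trans hs.1)
    _ = ENNReal.ofReal (ρ ^ n) * conical r (enn G) x ^ r := by
        rw [lintegral_const_mul' _ _ ofReal_ne_top, conical_rpow (zero_lt_one.trans_le hr)]
        rfl

theorem ballAvg_piMap_le {r : ℝ} (hr : 1 ≤ r) {t : ℝ} (ht : 0 < t)
    {G : Rn n → ℝ → ℝ} (hG : Measurable (Function.uncurry G)) (x : Rn n) :
    ballAvg r (fun y => (‖piMap t G y‖₊ : ℝ≥0∞)) x t ≤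
      (ENNReal.ofReal (Real.exp 1 ^ n) * (volume (ball (0 : Rn n) 1))⁻¹) ^ (1 / r) *
        conical r (enn G) x := by
  have hr0 : 0 < r := zero_lt_one.trans_le hr
  have htn : ENNReal.ofReal (t ^ n) ≠ 0 := by positivity
  rw [ballAvg]
  calc _ ≤ ((volume (ball x t))⁻¹ *
        (ENNReal.ofReal ((Real.exp 1 * t) ^ n) * conical r (enn G) x ^ r)) ^ (1 / r) := by
        gcongr; exact lintegral_ball_piMap_rpow_le hr ht hG x
    _ = ((ENNReal.ofReal (t ^ n))⁻¹ * ENNReal.ofReal (t ^ n) * (ENNReal.ofReal (Real.exp 1 ^ n) *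
        (volume (ball (0 : Rn n) 1))⁻¹ * conical r (enn G) x ^ r)) ^ (1 / r) := by
        rw [inv_volume_ball x ht, mul_pow, ENNReal.ofReal_mul (by positivity)]
        congr 1; ring
    _ = _ := by
        rw [ENNReal.inv_mul_cancel htn ofReal_ne_top, one_mul,
          ENNReal.mul_rpow_of_nonneg _ _ (by positivity), ← ENNReal.rpow_mul,
          mul_one_div_cancel hr0.ne', ENNReal.rpow_one]

theorem conical_iMap_rpow_le {r : ℝ} (hr : 0 < r) {t : ℝ} (ht : 0 < t) (f : Rn n → ℝ)
    (x : Rn n) :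
    conical r (enn (iMap t f)) x ^ r ≤
      (ENNReal.ofReal (t ^ n))⁻¹ * ∫⁻ y in ball x (Real.exp 1 * t), ‖f y‖ₑ ^ r := by
  set ρ := Real.exp 1 * t
  set c := (ENNReal.ofReal (t ^ n))⁻¹ * ∫⁻ y in ball x ρ, ‖f y‖ₑ ^ r
  have hslice : ∀ s ∈ Ioi (0 : ℝ),
      (∫⁻ y in ball x s, enn (iMap t f) y s ^ r) * ENNReal.ofReal (s ^ (-(n : ℝ) - 1)) ≤
        (Icc t ρ).indicator (fun s => ENNReal.ofReal s⁻¹ * c) s := by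
    intro s hs
    by_cases hst : s ∈ Icc t ρ
    · have hf : ∀ y, enn (iMap t f) y s = ‖f y‖ₑ := fun y => by
        rw [enn, iMap, if_pos hst]; rfl
      simp only [indicator_of_mem hst, hf, ofReal_rpow_neg_natCast_sub_one hs]
      calc (∫⁻ y in ball x s, ‖f y‖ₑ ^ r) *
            (ENNReal.ofReal s⁻¹ * (ENNReal.ofReal (s ^ n))⁻¹)
          ≤ (∫⁻ y in ball x ρ, ‖f y‖ₑ ^ r) *
            (ENNReal.ofReal s⁻¹ * (ENNReal.ofReal (t ^ n))⁻¹) := by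
            gcongr ?_ * (_ * ?_)
            · exact lintegral_mono_set (ball_subset_ball hst.2)
            · gcongr; exact hst.1
        _ = ENNReal.ofReal s⁻¹ * c := by ring
    · have hf : ∀ y, enn (iMap t f) y s = 0 := fun y => by
        rw [enn, iMap, if_neg hst, nnnorm_zero, ENNReal.coe_zero]
      simp [indicator_of_notMem hst, hf, ENNReal.zero_rpow_of_pos hr]
  rw [conical_rpow hr]
  calc _ ≤ ∫⁻ s in Ioi 0, (Icc t ρ).indicator (fun s => ENNReal.ofReal s⁻¹ * c) s :=
        setLIntegral_mono' measurableSet_Ioi hslice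
    _ ≤ ∫⁻ s in Ioc t ρ, ENNReal.ofReal s⁻¹ * c := by
        rw [setLIntegral_congr Ioc_ae_eq_Icc, ← lintegral_indicator measurableSet_Icc]
        exact setLIntegral_le_lintegral _ _
    _ = c := by
        rw [lintegral_mul_const _ measurable_inv.ennreal_ofReal, lintegral_inv_Ioc_exp_one_mul ht,
          one_mul]

theorem conical_iMap_le {r : ℝ} (hr : 0 < r) {t : ℝ} (ht : 0 < t) (f : Rn n → ℝ) (x : Rn n) :
    conical r (enn (iMap t f)) x ≤
      (ENNReal.ofReal (Real.exp 1 ^ n) * volume (ball (0 : Rn n) 1)) ^ (1 / r) *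
        ballAvg r (fun y => (‖f y‖₊ : ℝ≥0∞)) x (Real.exp 1 * t) := by
  set B := volume (ball (0 : Rn n) 1)
  set E := ENNReal.ofReal (Real.exp 1 ^ n)
  have hE : E ≠ 0 := by positivity
  have hB : B ≠ 0 := (measure_ball_pos volume _ one_pos).ne'
  have hscale : (ENNReal.ofReal (t ^ n))⁻¹ = E * B * (volume (ball x (Real.exp 1 * t)))⁻¹ := by
    rw [inv_volume_ball x (by positivity), mul_pow, ENNReal.ofReal_mul (by positivity),
      ENNReal.mul_inv (.inl hE) (.inl ofReal_ne_top)]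
    calc _ = E * E⁻¹ * (B * B⁻¹) * (ENNReal.ofReal (t ^ n))⁻¹ := by
          rw [ENNReal.mul_inv_cancel hE ofReal_ne_top,
            ENNReal.mul_inv_cancel hB measure_ball_lt_top.ne, one_mul, one_mul]
      _ = _ := by ring
  calc _ = (conical r (enn (iMap t f)) x ^ r) ^ (1 / r) := by
        rw [← ENNReal.rpow_mul, mul_one_div_cancel hr.ne', ENNReal.rpow_one]
    _ ≤ ((ENNReal.ofReal (t ^ n))⁻¹ * ∫⁻ y in ball x (Real.exp 1 * t), ‖f y‖ₑ ^ r) ^ (1 / r) := by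
        gcongr; exact conical_iMap_rpow_le hr ht f x
    _ = ((E * B) * ((volume (ball x (Real.exp 1 * t)))⁻¹ *
          ∫⁻ y in ball x (Real.exp 1 * t), ‖f y‖ₑ ^ r)) ^ (1 / r) := by
        rw [hscale, mul_assoc]
    _ = _ := ENNReal.mul_rpow_of_nonneg _ _ (by positivity)

/-- pointwise bounds for the retraction maps `π_t` and `i_t`,
with constants independent of `t`. -/
theorem stmt13 (n : ℕ) (r : ℝ) (hr : 1 ≤ r) :
    ∃ C : ℝ≥0∞, 0 < C ∧ C ≠ ∞ ∧
      (∀ (t : ℝ), 0 < t → ∀ G : Rn n → ℝ → ℝ, Measurable (Function.uncurry G) →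
        ∀ x : Rn n,
          ballAvg r (fun y => (‖piMap t G y‖₊ : ℝ≥0∞)) x t ≤ C * conical r (enn G) x) ∧
      (∀ (t : ℝ), 0 < t → ∀ f : Rn n → ℝ, Measurable f → ∀ x : Rn n,
        conical r (enn (iMap t f)) x ≤
          C * ballAvg r (fun y => (‖f y‖₊ : ℝ≥0∞)) x (Real.exp 1 * t)) := by
  have hr0 : 0 < r := zero_lt_one.trans_le hr
  set B := volume (ball (0 : Rn n) 1)
  have hB : B ≠ 0 := (measure_ball_pos volume _ one_pos).ne'
  have hB' : B ≠ ∞ := measure_ball_lt_top.ne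
  set C₁ := (ENNReal.ofReal (Real.exp 1 ^ n) * B⁻¹) ^ (1 / r)
  set C₂ := (ENNReal.ofReal (Real.exp 1 ^ n) * B) ^ (1 / r)
  refine ⟨max C₁ C₂, ?_, ?_, fun t ht G hG x => ?_, fun t ht f _ x => ?_⟩
  · exact lt_max_of_lt_left (ENNReal.rpow_pos (by simp [hB', Real.exp_pos]) (by finiteness))
  · exact max_ne_top (by finiteness) (by finiteness)
  · exact (ballAvg_piMap_le hr ht hG x).trans (by gcongr; exact le_max_left _ _)
  · exact (conical_iMap_le hr0 ht f x).trans (by gcongr; exact le_max_right _ _)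
end
end

section
/- If 0 < t, s < ∞ with c⁻¹ s ≤ t ≤ c s for some c ≥ 1, 1 ≤ r < ∞, and 0 < p < ∞, then the slice-spaces coincide: (E^p_r)_t = (E^p_r)_s with equivalent norms ‖f‖_{(E^p_r)_t} ≍ ‖f‖_{(E^p_r)_s}, the implied constants depending only on n, p, r, c. -/
open MeasureTheory Metric Set ENNReal
open scoped NNReal

noncomputable section

variable {n : ℕ}

/-! Cover `B(0, c)` by finitely many, say `N`, unit balls `B(z, 1)`. If `t ≤ c s`, then `B(x, t)` is
covered by the `N` balls `B(x + s z, s)`, and `|B(x, s)| ≤ cⁿ |B(x, t)|` when `s ≤ c t`; hence the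
`t`-average at `x` is at most `cⁿ` times the sum of the `s`-averages at the points `x + s z`.
Raising this to the power `p / r` and integrating in `x`, translation invariance of Lebesgue measure
bounds the `t`-slice norm by a multiple of the `s`-slice norm depending only on `c`, `N`, `p`, `r`;
the hypotheses are symmetric in `s` and `t`. -/

open Module

section LowerSemicontinuity

variable {X : Type*} [PseudoMetricSpace X] [MeasurableSpace X]

lemma lowerSemicontinuous_measure_ball (ν : Measure X) (s : ℝ) :
    LowerSemicontinuous fun x => ν (ball x s) := by
  intro x c hc
  change c < ν (ball x s) at hc
  have hmono : Monotone fun k : ℕ => ball x (s - 1 / (k + 1)) := fun i j hij =>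
    ball_subset_ball (by gcongr)
  have hunion : ⋃ k : ℕ, ball x (s - 1 / (k + 1)) = ball x s := by
    ext y
    simp only [mem_iUnion, mem_ball]
    refine ⟨fun ⟨k, hk⟩ => hk.trans_le (sub_le_self _ (by positivity)), fun hy => ?_⟩
    obtain ⟨k, hk⟩ := exists_nat_one_div_lt (sub_pos.2 hy)
    exact ⟨k, by linarith⟩
  rw [← hunion, hmono.measure_iUnion] at hc
  obtain ⟨k, hk⟩ := lt_iSup_iff.1 hc
  filter_upwards [ball_mem_nhds x (Nat.one_div_pos_of_nat (n := k))] with y hy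
  refine hk.trans_le (measure_mono (ball_subset_ball' ?_))
  rw [mem_ball, dist_comm] at hy
  linarith

/-- The integrand `g` need not be measurable: the lower integral is a supremum of integrals of
simple functions, each of which is a measure `μ.withDensity φ` evaluated on the ball. -/
lemma lowerSemicontinuous_setLIntegral_ball [OpensMeasurableSpace X] (μ : Measure X)
    (g : X → ℝ≥0∞) (s : ℝ) :
    LowerSemicontinuous fun x => ∫⁻ y in ball x s, g y ∂μ := by
  simp only [lintegral_def]
  refine lowerSemicontinuous_iSup fun φ => lowerSemicontinuous_iSup fun _ => ?_
  simpa only [← SimpleFunc.lintegral_eq_lintegral, withDensity_apply _ measurableSet_ball]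
    using lowerSemicontinuous_measure_ball (μ.withDensity φ) s

end LowerSemicontinuity

lemma ENNReal.rpow_finsetSum_le_card_rpow_mul {ι : Type*} (Z : Finset ι) (a : ι → ℝ≥0∞) {q : ℝ}
    (hq : 0 < q) : (∑ i ∈ Z, a i) ^ q ≤ (Z.card : ℝ≥0∞) ^ q * ∑ i ∈ Z, a i ^ q := by
  rcases Z.eq_empty_or_nonempty with rfl | hZ
  · simp [ENNReal.zero_rpow_of_pos hq]
  obtain ⟨i₀, hi₀, hmax⟩ := Z.exists_mem_eq_sup hZ a
  calc (∑ i ∈ Z, a i) ^ q ≤ ((Z.card : ℝ≥0∞) * a i₀) ^ q := by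
        gcongr
        rw [← hmax, ← nsmul_eq_mul, ← Finset.sum_const]
        exact Finset.sum_le_sum fun i hi => Finset.le_sup hi
    _ = (Z.card : ℝ≥0∞) ^ q * a i₀ ^ q := ENNReal.mul_rpow_of_nonneg _ _ hq.le
    _ ≤ (Z.card : ℝ≥0∞) ^ q * ∑ i ∈ Z, a i ^ q := by
        gcongr
        exact Finset.single_le_sum (f := fun i => a i ^ q) (fun _ _ => bot_le) hi₀

lemma setLIntegral_biUnion_finset_le {α ι : Type*} [MeasurableSpace α] (μ : Measure α)
    (Z : Finset ι) (B : ι → Set α) (g : α → ℝ≥0∞) :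
    ∫⁻ y in ⋃ i ∈ Z, B i, g y ∂μ ≤ ∑ i ∈ Z, ∫⁻ y in B i, g y ∂μ := by
  have h := lintegral_iUnion_le (μ := μ) (fun i : Z => B i) g
  rwa [iUnion_subtype, tsum_fintype, Finset.sum_coe_sort Z fun i => ∫⁻ y in B i, g y ∂μ] at h

lemma exists_finset_ball_subset_biUnion_ball {X : Type*} [PseudoMetricSpace X] [ProperSpace X]
    (x : X) (c : ℝ) {ε : ℝ} (hε : 0 < ε) : ∃ Z : Finset X, ball x c ⊆ ⋃ z ∈ Z, ball z ε := by
  obtain ⟨Z, -, hZ, hcover⟩ := finite_cover_balls_of_compact (isCompact_closedBall x c) hε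
  exact ⟨hZ.toFinset, ball_subset_closedBall.trans (by simpa using hcover)⟩

section NormedSpace

variable {E : Type*} [NormedAddCommGroup E]

lemma ball_subset_biUnion_ball_add_smul [NormedSpace ℝ E] {c s t : ℝ} {Z : Finset E}
    (hZ : ball 0 c ⊆ ⋃ z ∈ Z, ball z 1) (hs : 0 < s) (hts : t ≤ c * s) (x : E) :
    ball x t ⊆ ⋃ z ∈ Z, ball (x + s • z) s := by
  intro y hy
  have hy' : s⁻¹ • (y - x) ∈ ball 0 c := by
    rw [mem_ball_zero_iff, norm_smul, norm_inv, Real.norm_of_nonneg hs.le, inv_mul_lt_iff₀ hs,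
      mul_comm, ← dist_eq_norm]
    exact (mem_ball.1 hy).trans_le hts
  obtain ⟨z, hz, hyz⟩ := mem_iUnion₂.1 (hZ hy')
  refine mem_iUnion₂.2 ⟨z, hz, ?_⟩
  have hscale : y - (x + s • z) = s • (s⁻¹ • (y - x) - z) := by
    rw [smul_sub, smul_inv_smul₀ hs.ne']
    abel
  rw [mem_ball, dist_eq_norm, hscale, norm_smul, Real.norm_of_nonneg hs.le, ← dist_eq_norm]
  exact mul_lt_of_lt_one_right hs (mem_ball.1 hyz)

variable [MeasurableSpace E] [BorelSpace E] (μ : Measure E) [μ.IsAddHaarMeasure]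

lemma measurable_setLAverage_ball (g : E → ℝ≥0∞) (s : ℝ) :
    Measurable fun x => ⨍⁻ y in ball x s, g y ∂μ := by
  simp only [setLAverage_eq, Measure.addHaar_ball_center μ _ s]
  exact (lowerSemicontinuous_setLIntegral_ball μ g s).measurable.div_const _

variable [NormedSpace ℝ E] [FiniteDimensional ℝ E]

lemma measure_ball_le_of_le_mul {c s t : ℝ} (hc : 0 < c) (hst : s ≤ c * t) (x y : E) :
    μ (ball x s) ≤ ENNReal.ofReal (c ^ finrank ℝ E) * μ (ball y t) :=
  calc μ (ball x s) ≤ μ (ball x (c * t)) := measure_mono (ball_subset_ball hst)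
    _ = ENNReal.ofReal (c ^ finrank ℝ E) * μ (ball y t) := by
      rw [Measure.addHaar_ball_mul_of_pos μ x hc, Measure.addHaar_ball_center μ y]

lemma setLAverage_ball_le_sum {c s t : ℝ} {Z : Finset E} (hZ : ball 0 c ⊆ ⋃ z ∈ Z, ball z 1)
    (hc : 0 < c) (hs : 0 < s) (hst : s ≤ c * t) (hts : t ≤ c * s) (g : E → ℝ≥0∞) (x : E) :
    ⨍⁻ y in ball x t, g y ∂μ ≤
      ENNReal.ofReal (c ^ finrank ℝ E) * ∑ z ∈ Z, ⨍⁻ y in ball (x + s • z) s, g y ∂μ := by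
  have hball : ∀ z : E, μ (ball (x + s • z) s) = μ (ball x s) := fun z => by
    rw [Measure.addHaar_ball_center μ, Measure.addHaar_ball_center μ x]
  calc ⨍⁻ y in ball x t, g y ∂μ
      = (∫⁻ y in ball x t, g y ∂μ) / μ (ball x t) := setLAverage_eq μ _ _
    _ ≤ (∑ z ∈ Z, ∫⁻ y in ball (x + s • z) s, g y ∂μ) / μ (ball x t) := by
      gcongr
      exact (lintegral_mono_set (ball_subset_biUnion_ball_add_smul hZ hs hts x)).trans
        (setLIntegral_biUnion_finset_le μ Z _ g)
    _ = μ (ball x s) / μ (ball x t) * ∑ z ∈ Z, ⨍⁻ y in ball (x + s • z) s, g y ∂μ := by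
      simp only [← measure_mul_setLAverage _ measure_ball_lt_top.ne, hball, ← Finset.mul_sum,
        ENNReal.mul_div_right_comm]
    _ ≤ ENNReal.ofReal (c ^ finrank ℝ E) * ∑ z ∈ Z, ⨍⁻ y in ball (x + s • z) s, g y ∂μ := by
      gcongr
      exact ENNReal.div_le_of_le_mul (measure_ball_le_of_le_mul μ hc hst x x)

lemma lintegral_setLAverage_ball_rpow_le {c q s t : ℝ} {Z : Finset E}
    (hZ : ball 0 c ⊆ ⋃ z ∈ Z, ball z 1) (hc : 0 < c) (hq : 0 < q) (hs : 0 < s)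
    (hst : s ≤ c * t) (hts : t ≤ c * s) (g : E → ℝ≥0∞) :
    ∫⁻ x, (⨍⁻ y in ball x t, g y ∂μ) ^ q ∂μ ≤
      (ENNReal.ofReal (c ^ finrank ℝ E) * Z.card) ^ q * Z.card *
        ∫⁻ x, (⨍⁻ y in ball x s, g y ∂μ) ^ q ∂μ := by
  set K := ENNReal.ofReal (c ^ finrank ℝ E) * Z.card
  have hK : K ^ q ≠ ∞ := by finiteness
  have hpoint : ∀ x, (⨍⁻ y in ball x t, g y ∂μ) ^ q ≤
      K ^ q * ∑ z ∈ Z, (⨍⁻ y in ball (x + s • z) s, g y ∂μ) ^ q := fun x =>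
    calc (⨍⁻ y in ball x t, g y ∂μ) ^ q
        ≤ (ENNReal.ofReal (c ^ finrank ℝ E) *
            ∑ z ∈ Z, ⨍⁻ y in ball (x + s • z) s, g y ∂μ) ^ q := by
          gcongr
          exact setLAverage_ball_le_sum μ hZ hc hs hst hts g x
      _ ≤ K ^ q * ∑ z ∈ Z, (⨍⁻ y in ball (x + s • z) s, g y ∂μ) ^ q := by
          rw [ENNReal.mul_rpow_of_nonneg _ _ hq.le, ENNReal.mul_rpow_of_nonneg _ _ hq.le, mul_assoc]
          gcongr
          exact ENNReal.rpow_finsetSum_le_card_rpow_mul Z _ hq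
  have hmeas : Measurable fun x => (⨍⁻ y in ball x s, g y ∂μ) ^ q :=
    (measurable_setLAverage_ball μ g s).pow_const q
  calc ∫⁻ x, (⨍⁻ y in ball x t, g y ∂μ) ^ q ∂μ
      ≤ ∫⁻ x, K ^ q * ∑ z ∈ Z, (⨍⁻ y in ball (x + s • z) s, g y ∂μ) ^ q ∂μ := lintegral_mono hpoint
    _ = K ^ q * ∑ z ∈ Z, ∫⁻ x, (⨍⁻ y in ball (x + s • z) s, g y ∂μ) ^ q ∂μ := by
      rw [lintegral_const_mul' _ _ hK, lintegral_finsetSum' Z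
        (f := fun z x => (⨍⁻ y in ball (x + s • z) s, g y ∂μ) ^ q)
        fun z _ => (hmeas.comp (measurable_add_const (s • z))).aemeasurable]
    _ = K ^ q * Z.card * ∫⁻ x, (⨍⁻ y in ball x s, g y ∂μ) ^ q ∂μ := by
      simp only [lintegral_add_right_eq_self (fun x => (⨍⁻ y in ball x s, g y ∂μ) ^ q),
        Finset.sum_const, nsmul_eq_mul, mul_assoc]

end NormedSpace

lemma sliceNorm_eq_lintegral_setLAverage (p r t : ℝ) (f : Rn n → ℝ) :
    sliceNorm p r t f = (∫⁻ x, (⨍⁻ y in ball x t, ‖f y‖ₑ ^ r ∂volume) ^ (p / r)) ^ (1 / p) := by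
  simp only [sliceNorm, setLAverage_eq, ENNReal.div_eq_inv_mul]
  rfl

lemma sliceNorm_le_of_le_mul {p r c s t : ℝ} {Z : Finset (Rn n)} (hr : 0 < r) (hp : 0 < p)
    (hZ : ball 0 c ⊆ ⋃ z ∈ Z, ball z 1) (hc : 0 < c) (hs : 0 < s) (hst : s ≤ c * t)
    (hts : t ≤ c * s) (f : Rn n → ℝ) :
    sliceNorm p r t f ≤
      ((ENNReal.ofReal (c ^ n) * Z.card) ^ (p / r) * Z.card) ^ (1 / p) * sliceNorm p r s f := by
  rw [sliceNorm_eq_lintegral_setLAverage, sliceNorm_eq_lintegral_setLAverage,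
    ← ENNReal.mul_rpow_of_nonneg _ _ (by positivity)]
  gcongr
  simpa only [finrank_euclideanSpace_fin] using
    lintegral_setLAverage_ball_rpow_le volume hZ hc (div_pos hp hr) hs hst hts _

theorem stmt14_general (n : ℕ) (p r c : ℝ) (hr : 1 ≤ r) (hp : 0 < p) :
    ∃ C : ℝ≥0∞, 0 < C ∧ C ≠ ∞ ∧ ∀ t s : ℝ, 0 < t → 0 < s →
      c⁻¹ * s ≤ t → t ≤ c * s → ∀ f : Rn n → ℝ,
        sliceNorm p r t f ≤ C * sliceNorm p r s f ∧
        sliceNorm p r s f ≤ C * sliceNorm p r t f := by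
  obtain ⟨Z, hZ⟩ := exists_finset_ball_subset_biUnion_ball (0 : Rn n) c one_pos
  set K := ((ENNReal.ofReal (c ^ n) * Z.card) ^ (p / r) * Z.card) ^ (1 / p)
  have hK : K ≠ ∞ := by finiteness
  refine ⟨max 1 K, one_pos.trans_le (le_max_left _ _), max_ne_top one_ne_top hK,
    fun t s ht hs hst hts f => ?_⟩
  have hr₀ : 0 < r := one_pos.trans_le hr
  have hc : 0 < c := pos_of_mul_pos_left (ht.trans_le hts) hs.le
  replace hst : s ≤ c * t := (inv_mul_le_iff₀ hc).1 hst
  have hKC : K ≤ max 1 K := le_max_right _ _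
  exact ⟨(sliceNorm_le_of_le_mul hr₀ hp hZ hc hs hst hts f).trans (by gcongr),
    (sliceNorm_le_of_le_mul hr₀ hp hZ hc ht hts hst f).trans (by gcongr)⟩

/-- slice-space norms at comparable scales are equivalent. -/
theorem stmt14 (n : ℕ) (p r c : ℝ) (hr : 1 ≤ r) (hp : 0 < p) (hc : 1 ≤ c) :
    ∃ C : ℝ≥0∞, 0 < C ∧ C ≠ ∞ ∧ ∀ t s : ℝ, 0 < t → 0 < s →
      c⁻¹ * s ≤ t → t ≤ c * s → ∀ f : Rn n → ℝ,
        sliceNorm p r t f ≤ C * sliceNorm p r s f ∧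
        sliceNorm p r s f ≤ C * sliceNorm p r t f :=
  stmt14_general n p r c hr hp
end
end
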